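/- arXiv:1409.5312 — 2 statements merged into one kernel-verified Lean document; each statement's English description precedes it below -/
import Mathlib

section
/- For every natural number n ≥ 2, the n-cube ω^n (i.e., the n-grid on ℕ^n whose i-th equivalence relation relates two n-tuples iff all of their coordinates coincide except possibly the i-th one) admits an acceptable coloring. -/
/-!
Colour a tuple by a coordinate at which it is minimal. If `x` has colour `i`, pick `j ≠ i`:
then `x i ≤ x j`, and on the `E_i`-class of `a` the coordinate `x j = a j` is fixed, so `x`
is determined by `x i ∈ [0, a j]`.
-/

open Function

theorem finite_setOf_forall_ne_eq_and_argmin_eq {ι : Type*} [Nontrivial ι] [DecidableEq ι]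
    (a : ι → ℕ) (i : ι) :
    {x : ι → ℕ | (∀ j, j ≠ i → a j = x j) ∧ argmin x = i}.Finite := by
  obtain ⟨j, hji⟩ := exists_ne i
  refine ((Set.finite_Iic (a j)).image (update a i)).subset ?_
  rintro x ⟨hagree, hmin⟩
  refine ⟨x i, ?_, update_eq_iff.mpr ⟨rfl, hagree⟩⟩
  calc x i = x (argmin x) := by rw [hmin]
    _ ≤ x j := argmin_le x j
    _ = a j := (hagree j hji).symm

/-- For every `n ≥ 2`, the `n`-cube `ω^n` (on `ℕ^n`, where `E_i` relates two tuples iff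
all coordinates except possibly the `i`-th coincide) admits an acceptable coloring. -/
theorem nat_cube_admits_acceptable_coloring (n : ℕ) (hn : 2 ≤ n) :
    ∃ χ : (Fin n → ℕ) → Fin n, ∀ (a : Fin n → ℕ) (i : Fin n),
      {x : Fin n → ℕ | (∀ j : Fin n, j ≠ i → a j = x j) ∧ χ x = i}.Finite := by
  have : Nontrivial (Fin n) := Fin.nontrivial_iff_two_le.mpr hn
  exact ⟨fun x => argmin x, finite_setOf_forall_ne_eq_and_argmin_eq⟩
end

section
/- Let {A_α : α < ω₁} be a family of infinite subsets of ℕ that is almost disjoint (i.e., A_α ∩ A_β is finite whenever α ≠ β), and let A = {(n, α) ∈ ℕ × ω₁ : n ∈ A_α}, regarded as a 2-grid with the equivalence relations inherited from the 2-cube ℕ × ω₁ (E_0 relates pairs with the same second coordinate, E_1 relates pairs with the same first coordinate). Then the 2-grid A does not admit an acceptable coloring. -/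
/-!
Every column `A_α` is infinite but carries only finitely many points of colour `0`, so each
column contains a point of colour `1`. Every row carries only finitely many points of colour `1`
and there are countably many rows, so the points of colour `1` form a countable set; it projects
onto the set of columns, which would make `ω₁` countable.
-/

section GridColoring

variable {X Y : Type*} {A : Y → Set X} (χ : {p : X × Y // p.1 ∈ A p.2} → Fin 2)

theorem exists_colour_one_of_column_infinite {y : Y} (hA : (A y).Infinite)
    (hcol : {x : {p : X × Y // p.1 ∈ A p.2} | x.val.2 = y ∧ χ x = 0}.Finite) :
    ∃ x : {p : X × Y // p.1 ∈ A p.2}, x.val.2 = y ∧ χ x = 1 := by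
  have hcolumn : {x : {p : X × Y // p.1 ∈ A p.2} | x.val.2 = y}.Infinite := by
    refine Set.Infinite.of_image (fun x => x.val.1) (hA.mono ?_)
    exact fun n hn => ⟨⟨(n, y), hn⟩, rfl, rfl⟩
  obtain ⟨x, hxy, hx⟩ := (hcolumn.sdiff hcol).nonempty
  exact ⟨x, hxy, Fin.eq_one_of_ne_zero _ fun h0 => hx ⟨hxy, h0⟩⟩

theorem countable_colour_one_of_row_finite [Countable X]
    (hrow : ∀ a : {p : X × Y // p.1 ∈ A p.2},
      {x : {p : X × Y // p.1 ∈ A p.2} | x.val.1 = a.val.1 ∧ χ x = 1}.Finite) :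
    {x : {p : X × Y // p.1 ∈ A p.2} | χ x = 1}.Countable := by
  have hrows : {x | χ x = 1} ⊆ ⋃ n : X, {x : {p : X × Y // p.1 ∈ A p.2} | x.val.1 = n ∧ χ x = 1} :=
    fun x hx => Set.mem_iUnion.2 ⟨x.val.1, rfl, hx⟩
  refine Set.Countable.mono hrows (Set.countable_iUnion fun n => ?_)
  rcases Set.eq_empty_or_nonempty {x : {p : X × Y // p.1 ∈ A p.2} | x.val.1 = n ∧ χ x = 1}
    with hempty | ⟨a, rfl, -⟩
  · simp [hempty]
  · exact (hrow a).countable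

theorem countable_of_acceptable_coloring [Countable X] (hA : ∀ y, (A y).Infinite)
    (hχ : ∀ a : {p : X × Y // p.1 ∈ A p.2},
      {x : {p : X × Y // p.1 ∈ A p.2} | x.val.2 = a.val.2 ∧ χ x = 0}.Finite ∧
      {x : {p : X × Y // p.1 ∈ A p.2} | x.val.1 = a.val.1 ∧ χ x = 1}.Finite) :
    Countable Y := by
  have hcount := (countable_colour_one_of_row_finite χ fun a => (hχ a).2).to_subtype
  refine Function.Surjective.countable (f := fun x : {x | χ x = 1} => x.val.val.2) fun y => ?_
  obtain ⟨n, hn⟩ := (hA y).nonempty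
  obtain ⟨x, hxy, hx⟩ := exists_colour_one_of_column_infinite χ (hA y) (hχ ⟨(n, y), hn⟩).1
  exact ⟨⟨x, hx⟩, hxy⟩

end GridColoring

theorem not_countable_aleph_one_toType :
    ¬ Countable (Cardinal.aleph 1 : Cardinal.{0}).ord.ToType := by
  rw [← Cardinal.mk_le_aleph0_iff, Cardinal.mk_ord_toType, not_le]
  exact Cardinal.aleph0_lt_aleph_one

theorem ad_family_grid_no_acceptable_coloring_general
    (Afam : (Cardinal.aleph 1 : Cardinal.{0}).ord.ToType → Set ℕ)
    (hinf : ∀ α, (Afam α).Infinite) :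
    ¬ ∃ χ : {p : ℕ × (Cardinal.aleph 1 : Cardinal.{0}).ord.ToType // p.1 ∈ Afam p.2} → Fin 2,
      ∀ a : {p : ℕ × (Cardinal.aleph 1 : Cardinal.{0}).ord.ToType // p.1 ∈ Afam p.2},
        {x : {p : ℕ × (Cardinal.aleph 1 : Cardinal.{0}).ord.ToType // p.1 ∈ Afam p.2} |
          x.val.2 = a.val.2 ∧ χ x = 0}.Finite ∧
        {x : {p : ℕ × (Cardinal.aleph 1 : Cardinal.{0}).ord.ToType // p.1 ∈ Afam p.2} |
          x.val.1 = a.val.1 ∧ χ x = 1}.Finite := by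
  rintro ⟨χ, hχ⟩
  exact not_countable_aleph_one_toType (countable_of_acceptable_coloring χ hinf hχ)

/-- For an almost disjoint family `{A_α : α < ω₁}` of infinite subsets of `ℕ`, the 2-grid
`A = {(n, α) : n ∈ A_α} ⊆ ℕ × ω₁` (with `E_0` = same second coordinate, `E_1` = same first
coordinate) does not admit an acceptable coloring. -/
theorem ad_family_grid_no_acceptable_coloring
    (Afam : (Cardinal.aleph 1 : Cardinal.{0}).ord.ToType → Set ℕ)
    (hinf : ∀ α, (Afam α).Infinite)
    (had : ∀ α β, α ≠ β → (Afam α ∩ Afam β).Finite) :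
    ¬ ∃ χ : {p : ℕ × (Cardinal.aleph 1 : Cardinal.{0}).ord.ToType // p.1 ∈ Afam p.2} → Fin 2,
      ∀ a : {p : ℕ × (Cardinal.aleph 1 : Cardinal.{0}).ord.ToType // p.1 ∈ Afam p.2},
        {x : {p : ℕ × (Cardinal.aleph 1 : Cardinal.{0}).ord.ToType // p.1 ∈ Afam p.2} |
          x.val.2 = a.val.2 ∧ χ x = 0}.Finite ∧
        {x : {p : ℕ × (Cardinal.aleph 1 : Cardinal.{0}).ord.ToType // p.1 ∈ Afam p.2} |
          x.val.1 = a.val.1 ∧ χ x = 1}.Finite :=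
  ad_family_grid_no_acceptable_coloring_general Afam hinf
end
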